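/- arXiv:1406.0217 — 2 statements merged into one kernel-verified Lean document; each statement's English description precedes it below -/
import Mathlib

section
/- Let T be a binary phylogenetic tree on leaf set {1,…,6} of symmetric shape (some vertex of T has all three of its neighbors of degree 3). Then the number of ordered pairs (f_1, f_2) of characters with f_1(1) = 0, f_2(1) = 0, ps(f_1,T) = 1, ps(f_2,T) = 2, and f_1 not compatible with f_2 equals 30. -/
open Classical

/-- A binary phylogenetic tree on leaf set `{1, …, n}` (represented by `Fin n`),
with vertex set `Fin (2 * n - 2)`: a connected acyclic simple graph in which every
vertex has degree 1 or 3, together with a bijective labeling of the degree-1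
vertices (the leaves) by `Fin n`.  The collection of such trees is `UB(n)`. -/
structure PhyloTree (n : ℕ) where
  adj : SimpleGraph (Fin (2 * n - 2))
  connected : adj.Connected
  acyclic : adj.IsAcyclic
  degOneOrThree : ∀ v, (adj.neighborSet v).ncard = 1 ∨ (adj.neighborSet v).ncard = 3
  leaf : Fin n → Fin (2 * n - 2)
  leaf_inj : Function.Injective leaf
  leaf_range : ∀ v, (adj.neighborSet v).ncard = 1 ↔ ∃ i, leaf i = v

/-- The changing number of an assignment `g` of states to the vertices of `T`:
the number of edges of `T` whose two endpoints receive different states. -/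
noncomputable def changingNumber {n : ℕ} (T : PhyloTree n)
    (g : Fin (2 * n - 2) → Bool) : ℕ :=
  Set.ncard {e : Sym2 (Fin (2 * n - 2)) |
    e ∈ T.adj.edgeSet ∧ ∃ u v, e = s(u, v) ∧ g u ≠ g v}

/-- The parsimony score of a character `f` on a tree `T`: the minimum changing
number over all extensions of `f` to the vertices of `T`. -/
noncomputable def ps {n : ℕ} (f : Fin n → Bool) (T : PhyloTree n) : ℕ :=
  sInf {m | ∃ g : Fin (2 * n - 2) → Bool,
    (∀ i, g (T.leaf i) = f i) ∧ changingNumber T g = m}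

/-- The set of splits of `T`: for each edge `s(u, v)` of `T`, the bipartition of the
leaf labels into those whose leaf lies in the component of `u` and those whose leaf
lies in the component of `v`, after deleting the edge. -/
def splits {n : ℕ} (T : PhyloTree n) : Set (Set (Set (Fin n))) :=
  {σ | ∃ u v, s(u, v) ∈ T.adj.edgeSet ∧
    σ = { {i | (T.adj.deleteEdges {s(u, v)}).Reachable (T.leaf i) u},
          {i | (T.adj.deleteEdges {s(u, v)}).Reachable (T.leaf i) v} } }

/-- A character `f` is compatible with a tree `T` if it is non-constant and the
partition `{f⁻¹(0), f⁻¹(1)}` equals the split of `T` at some edge. -/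
def CompatibleWithTree {n : ℕ} (f : Fin n → Bool) (T : PhyloTree n) : Prop :=
  (∃ i j, f i ≠ f j) ∧
    ({ {i | f i = false}, {i | f i = true} } : Set (Set (Fin n))) ∈ splits T

/-- Two characters are compatible with each other if at least one of the four
intersections of their preimage sets is empty. -/
def CharCompatible {n : ℕ} (f₁ f₂ : Fin n → Bool) : Prop :=
  {i | f₁ i = false} ∩ {i | f₂ i = false} = ∅ ∨
  {i | f₁ i = false} ∩ {i | f₂ i = true} = ∅ ∨
  {i | f₁ i = true} ∩ {i | f₂ i = false} = ∅ ∨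
  {i | f₁ i = true} ∩ {i | f₂ i = true} = ∅

/-- A tree on six leaves has the symmetric shape if some vertex has all three of
its neighbors of degree 3. -/
def IsSymmetricShape (T : PhyloTree 6) : Prop :=
  ∃ v, (T.adj.neighborSet v).ncard = 3 ∧
    ∀ u ∈ T.adj.neighborSet v, (T.adj.neighborSet u).ncard = 3

/-- A tree on six leaves has the caterpillar shape if no vertex has all three of
its neighbors of degree 3. -/
def IsCaterpillarShape (T : PhyloTree 6) : Prop :=
  ¬ ∃ v, (T.adj.neighborSet v).ncard = 3 ∧
    ∀ u ∈ T.adj.neighborSet v, (T.adj.neighborSet u).ncard = 3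

/-- `T` is a maximum parsimony tree for the sequence of characters `F`. -/
def IsMPTree {n k : ℕ} (F : Fin k → Fin n → Bool) (T : PhyloTree n) : Prop :=
  ∀ T' : PhyloTree n, (∑ i, ps (F i) T) ≤ ∑ i, ps (F i) T'

/-!
A symmetric tree on six leaves is a root joined to three cherries. On a tree of depth two an
extension is free on the root and on the middle vertices, so the parsimony score is the least
changing number over these finitely many internal states. Relabelling the leaves so that the
cherries become `{0, 1}`, `{2, 3}`, `{4, 5}` while fixing leaf `0` preserves parsimony scores and
compatibility, so the count equals the same count on one fixed tree, which is a finite computation.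
-/

open Finset SimpleGraph

lemma exists_equiv_comp_eq_of_card_fiber {ι κ : Type*} [Fintype ι] [DecidableEq ι] [DecidableEq κ]
    {π π₀ : ι → κ} (hcard : ∀ k, #{i | π i = k} = #{i | π₀ i = k}) (a : ι) (ha : π a = π₀ a) :
    ∃ σ : ι ≃ ι, π ∘ σ = π₀ ∧ σ a = a := by
  let τ : ι ≃ ι := Equiv.ofFiberEquiv (f := π₀) (g := π) fun k =>
    Fintype.equivOfCardEq <| by
      rw [Fintype.card_subtype, Fintype.card_subtype, hcard]
  have hτ : ∀ i, π (τ i) = π₀ i := fun i => Equiv.ofFiberEquiv_map _ i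
  set j := τ.symm a
  have hj : π₀ j = π₀ a := by rw [← hτ, τ.apply_symm_apply, ha]
  refine ⟨τ * Equiv.swap a j, funext fun i => ?_, by simp [j]⟩
  simp only [Function.comp_apply, Equiv.Perm.coe_mul, hτ]
  rcases eq_or_ne i a with rfl | hia
  · simp [hj]
  rcases eq_or_ne i j with rfl | hij
  · simp [hj]
  · rw [Equiv.swap_apply_of_ne_of_ne hia hij]

lemma card_fiber_eq_of_card_fiber_le {ι κ : Type*} [Fintype ι] [Fintype κ] [DecidableEq κ]
    {π : ι → κ} {d : ℕ} (hle : ∀ k, #{i | π i = k} ≤ d)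
    (hcard : Fintype.card ι = Fintype.card κ * d) (k : κ) : #{i | π i = k} = d := by
  have hsum : ∑ k, #{i | π i = k} = ∑ _k : κ, d := by
    rw [← card_eq_sum_card_fiberwise fun _ _ => mem_univ _, sum_const, card_univ, card_univ,
      smul_eq_mul, hcard]
  exact (sum_eq_sum_iff_of_le fun k _ => hle k).1 hsum k (mem_univ k)

lemma SimpleGraph.Connected.eq_or_eq_of_neighborSet_eq {V : Type*} {G : SimpleGraph V}
    (hG : G.Connected) {a b : V} (ha : G.neighborSet a = {b}) (hb : G.neighborSet b = {a})
    (v : V) : v = a ∨ v = b := by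
  obtain ⟨p⟩ := hG.preconnected a v
  by_contra hv
  obtain ⟨d, -, hd, hd'⟩ := p.exists_boundary_dart {a, b} (by simp) (by simpa using hv)
  have hadj : d.snd ∈ G.neighborSet d.fst := d.adj
  rcases hd with hd | hd <;> rw [hd] at hadj
  · rw [ha] at hadj; exact hd' (by simp_all)
  · rw [hb] at hadj; exact hd' (by simp_all)

lemma Sym2.exists_mk_eq_and_ne_iff {α β : Type*} (g : α → β) (a b : α) :
    (∃ u v, s(a, b) = s(u, v) ∧ g u ≠ g v) ↔ g a ≠ g b := by
  refine ⟨?_, fun h => ⟨a, b, rfl, h⟩⟩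
  rintro ⟨u, v, huv, hne⟩
  rcases Sym2.eq_iff.1 huv with ⟨rfl, rfl⟩ | ⟨rfl, rfl⟩
  exacts [hne, hne.symm]

section DepthTwoScore

variable {ι κ : Type*} [Fintype ι] [Fintype κ]

/-- Changing number on the tree with a root in state `b`, middle vertices `k : κ` in states `t k`,
and leaf `i` in state `f i` hanging from middle vertex `π i`. -/
def depthTwoCost (π : ι → κ) (f : ι → Bool) (b : Bool) (t : κ → Bool) : ℕ :=
  #{k | b ≠ t k} + #{i | t (π i) ≠ f i}

def depthTwoScore [DecidableEq κ] (π : ι → κ) (f : ι → Bool) : ℕ :=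
  (univ : Finset (Bool × (κ → Bool))).inf' univ_nonempty fun bt => depthTwoCost π f bt.1 bt.2

lemma depthTwoCost_comp_equiv {ι' : Type*} [Fintype ι'] (σ : ι' ≃ ι) (π : ι → κ) (f : ι → Bool)
    (b : Bool) (t : κ → Bool) : depthTwoCost (π ∘ σ) (f ∘ σ) b t = depthTwoCost π f b t := by
  simp only [depthTwoCost, Function.comp_apply]
  congr 1
  exact card_equiv σ (by simp)

lemma depthTwoScore_comp_equiv [DecidableEq κ] {ι' : Type*} [Fintype ι'] (σ : ι' ≃ ι) (π : ι → κ)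
    (f : ι → Bool) : depthTwoScore (π ∘ σ) (f ∘ σ) = depthTwoScore π f := by
  simp only [depthTwoScore, depthTwoCost_comp_equiv]

end DepthTwoScore

namespace PhyloTree

variable {n : ℕ} (T : PhyloTree n)

lemma exists_neighborSet_leaf_eq (i : Fin n) : ∃ u, T.adj.neighborSet (T.leaf i) = {u} :=
  Set.ncard_eq_one.1 <| (T.leaf_range _).2 ⟨i, rfl⟩

lemma leaf_ne_of_ncard_neighborSet_eq_three {v : Fin (2 * n - 2)}
    (hv : (T.adj.neighborSet v).ncard = 3) (i : Fin n) : T.leaf i ≠ v := by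
  rintro rfl
  have := (T.leaf_range (T.leaf i)).2 ⟨i, rfl⟩
  omega

lemma ncard_neighborSet_eq_three_of_neighborSet_leaf_eq (hn : 3 ≤ n) {i : Fin n}
    {u : Fin (2 * n - 2)} (hu : T.adj.neighborSet (T.leaf i) = {u}) : (T.adj.neighborSet u).ncard = 3 := by
  refine (T.degOneOrThree u).resolve_left fun hu1 => ?_
  obtain ⟨w, hw⟩ := Set.ncard_eq_one.1 hu1
  have hiu : T.leaf i ∈ T.adj.neighborSet u :=
    (T.adj.mem_neighborSet _ _).2 ((T.adj.mem_neighborSet _ _).1 (hu ▸ rfl)).symm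
  rw [hw, Set.mem_singleton_iff] at hiu
  have hall := T.connected.eq_or_eq_of_neighborSet_eq hu (hiu ▸ hw)
  have : Fintype.card (Fin (2 * n - 2)) ≤ 2 :=
    (card_le_card (s := univ) (t := {T.leaf i, u}) fun v _ => by
      rcases hall v with rfl | rfl <;> simp).trans card_le_two
  simp only [Fintype.card_fin] at this
  omega

section DepthTwo

variable {κ : Type*} (c : Fin (2 * n - 2)) (m : κ → Fin (2 * n - 2)) (π : Fin n → κ)

def depthTwoVertex : Option (κ ⊕ Fin n) → Fin (2 * n - 2)
  | none => c
  | some (.inl k) => m k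
  | some (.inr i) => T.leaf i

def depthTwoEdge (x : κ ⊕ Fin n) : Sym2 (Fin (2 * n - 2)) :=
  Sym2.map (T.depthTwoVertex c m)
    (x.elim (fun k => s(none, some (.inl k))) fun i => s(some (.inl (π i)), some (.inr i)))

variable {T c m π}

lemma depthTwoEdge_injective (hvert : Function.Injective (T.depthTwoVertex c m)) :
    Function.Injective (T.depthTwoEdge c m π) := by
  refine (Sym2.map.injective hvert).comp ?_
  rintro (k | i) (k' | i') h <;> simp_all

lemma edgeSet_eq_range_depthTwoEdge [Fintype κ] (hroot : ∀ k, T.adj.Adj c (m k))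
    (hleaf : ∀ i, T.adj.Adj (m (π i)) (T.leaf i))
    (hvert : Function.Bijective (T.depthTwoVertex c m)) :
    T.adj.edgeSet = Set.range (T.depthTwoEdge c m π) := by
  have hsub : Set.range (T.depthTwoEdge c m π) ⊆ T.adj.edgeSet := by
    rintro _ ⟨k | i, rfl⟩
    exacts [hroot k, hleaf i]
  refine (Set.eq_of_subset_of_ncard_le hsub ?_ (Set.toFinite _)).symm
  have hcard := (Fintype.card_congr (Equiv.ofBijective _ hvert)).trans
    (IsTree.card_edgeFinset ⟨T.connected, T.acyclic⟩).symm
  rw [← coe_edgeFinset, Set.ncard_coe_finset, Set.ncard_range_of_injective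
    (depthTwoEdge_injective hvert.injective), Nat.card_eq_fintype_card]
  simp only [Fintype.card_option, Fintype.card_sum, Fintype.card_fin] at hcard ⊢
  omega

lemma changingNumber_eq_depthTwoCost [Fintype κ] (hroot : ∀ k, T.adj.Adj c (m k))
    (hleaf : ∀ i, T.adj.Adj (m (π i)) (T.leaf i))
    (hvert : Function.Bijective (T.depthTwoVertex c m)) (g : Fin (2 * n - 2) → Bool) :
    changingNumber T g = depthTwoCost π (g ∘ T.leaf) (g c) (g ∘ m) := by
  have hchange : {e | e ∈ T.adj.edgeSet ∧ ∃ u v, e = s(u, v) ∧ g u ≠ g v} =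
      T.depthTwoEdge c m π '' {x | x.elim (fun k => g c ≠ g (m k))
        fun i => g (m (π i)) ≠ g (T.leaf i)} := by
    have hdiff : ∀ x, (∃ u v, T.depthTwoEdge c m π x = s(u, v) ∧ g u ≠ g v) ↔
        x.elim (fun k => g c ≠ g (m k)) fun i => g (m (π i)) ≠ g (T.leaf i) := by
      rintro (k | i) <;> exact Sym2.exists_mk_eq_and_ne_iff g _ _
    rw [edgeSet_eq_range_depthTwoEdge hroot hleaf hvert]
    ext e
    constructor
    · rintro ⟨⟨x, rfl⟩, h⟩
      exact ⟨x, (hdiff x).1 h, rfl⟩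
    · rintro ⟨x, hx, rfl⟩
      exact ⟨⟨x, rfl⟩, (hdiff x).2 hx⟩
  rw [changingNumber, hchange,
    Set.ncard_image_of_injective _ (depthTwoEdge_injective hvert.injective),
    Set.ncard_eq_toFinset_card', Set.toFinset_ofPred, card_filter, Fintype.sum_sum_type,
    ← card_filter, ← card_filter]
  simp only [Sum.elim_inl, Sum.elim_inr, depthTwoCost, Function.comp_apply]
  congr

lemma exists_extension_changingNumber_eq_depthTwoCost [Fintype κ]
    (hroot : ∀ k, T.adj.Adj c (m k)) (hleaf : ∀ i, T.adj.Adj (m (π i)) (T.leaf i))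
    (hvert : Function.Bijective (T.depthTwoVertex c m)) (f : Fin n → Bool) (b : Bool)
    (t : κ → Bool) :
    ∃ g, (∀ i, g (T.leaf i) = f i) ∧ changingNumber T g = depthTwoCost π f b t := by
  let e := Equiv.ofBijective _ hvert
  let g : Fin (2 * n - 2) → Bool := fun v => (e.symm v).elim b (Sum.elim t f)
  have hg : ∀ x, g (T.depthTwoVertex c m x) = x.elim b (Sum.elim t f) := fun x =>
    congrArg (fun y => y.elim b (Sum.elim t f)) (e.symm_apply_apply x)
  refine ⟨g, fun i => hg (some (.inr i)), ?_⟩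
  rw [changingNumber_eq_depthTwoCost hroot hleaf hvert,
    show g ∘ T.leaf = f from funext fun i => hg (some (.inr i)), show g c = b from hg none,
    show g ∘ m = t from funext fun k => hg (some (.inl k))]

lemma ps_eq_depthTwoScore [Fintype κ] [DecidableEq κ]
    (hroot : ∀ k, T.adj.Adj c (m k)) (hleaf : ∀ i, T.adj.Adj (m (π i)) (T.leaf i))
    (hvert : Function.Bijective (T.depthTwoVertex c m)) (f : Fin n → Bool) :
    ps f T = depthTwoScore π f := by
  apply le_antisymm
  · obtain ⟨bt, -, hbt⟩ := exists_mem_eq_inf' univ_nonempty fun bt : Bool × (κ → Bool) =>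
      depthTwoCost π f bt.1 bt.2
    obtain ⟨g, hg, hcost⟩ :=
      exists_extension_changingNumber_eq_depthTwoCost hroot hleaf hvert f bt.1 bt.2
    exact Nat.sInf_le ⟨g, hg, hcost.trans hbt.symm⟩
  · obtain ⟨g, hg, -⟩ :=
      exists_extension_changingNumber_eq_depthTwoCost hroot hleaf hvert f false fun _ => false
    refine le_csInf ⟨_, g, hg, rfl⟩ ?_
    rintro _ ⟨g, hg, rfl⟩
    rw [changingNumber_eq_depthTwoCost hroot hleaf hvert, show g ∘ T.leaf = f from funext hg]
    exact inf'_le _ (mem_univ (g c, g ∘ m))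

lemma depthTwoVertex_injective (hm : Function.Injective m) (hroot : ∀ k, T.adj.Adj c (m k))
    (hc : (T.adj.neighborSet c).ncard = 3) (hmid : ∀ k, (T.adj.neighborSet (m k)).ncard = 3) :
    Function.Injective (T.depthTwoVertex c m) := by
  have hcm : ∀ k, c ≠ m k := fun k => (hroot k).ne
  have hleaf_c : ∀ i, T.leaf i ≠ c := T.leaf_ne_of_ncard_neighborSet_eq_three hc
  have hleaf_m : ∀ i k, T.leaf i ≠ m k := fun i k =>
    T.leaf_ne_of_ncard_neighborSet_eq_three (hmid k) i
  rintro (_ | k | i) (_ | k' | i') h <;>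
    simp_all [depthTwoVertex, hm.eq_iff, T.leaf_inj.eq_iff, eq_comm]

lemma exists_neighborSet_leaf_eq_singleton_mid (hn : 3 ≤ n)
    (hvert : Function.Surjective (T.depthTwoVertex c m))
    (hc : ∀ u ∈ T.adj.neighborSet c, (T.adj.neighborSet u).ncard = 3) (i : Fin n) :
    ∃ k, T.adj.neighborSet (T.leaf i) = {m k} := by
  obtain ⟨u, hu⟩ := T.exists_neighborSet_leaf_eq i
  have hu3 := T.ncard_neighborSet_eq_three_of_neighborSet_leaf_eq hn hu
  have hadj : T.adj.Adj (T.leaf i) u := by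
    rw [← SimpleGraph.mem_neighborSet, hu]; rfl
  obtain ⟨_ | k | j, rfl⟩ := hvert u
  · exact absurd rfl (T.leaf_ne_of_ncard_neighborSet_eq_three (hc _ hadj.symm) i)
  · exact ⟨k, hu⟩
  · exact absurd rfl (T.leaf_ne_of_ncard_neighborSet_eq_three hu3 j)

lemma card_fiber_le_two [DecidableEq κ] (hroot : ∀ k, T.adj.Adj c (m k))
    (hc : (T.adj.neighborSet c).ncard = 3)
    (hmid : ∀ k, (T.adj.neighborSet (m k)).ncard = 3)
    (hπ : ∀ i, T.adj.neighborSet (T.leaf i) = {m (π i)}) (k : κ) :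
    #{i | π i = k} ≤ 2 := by
  have hsub : T.leaf '' {i | π i = k} ⊆ T.adj.neighborSet (m k) \ {c} := by
    rintro _ ⟨i, rfl, rfl⟩
    refine ⟨SimpleGraph.Adj.symm ?_, T.leaf_ne_of_ncard_neighborSet_eq_three hc i⟩
    rw [← SimpleGraph.mem_neighborSet, hπ]; rfl
  calc #{i | π i = k} = (T.leaf '' {i | π i = k}).ncard := by
        rw [Set.ncard_image_of_injective _ T.leaf_inj, ← Set.ncard_coe_finset]; simp
    _ ≤ (T.adj.neighborSet (m k) \ {c}).ncard := Set.ncard_le_ncard hsub (Set.toFinite _)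
    _ = 2 := by
      rw [Set.ncard_sdiff_singleton_of_mem ((T.adj.mem_neighborSet _ _).2 (hroot k).symm), hmid]

end DepthTwo

lemma exists_depthTwo_of_isSymmetricShape (T : PhyloTree 6) (h : IsSymmetricShape T) :
    ∃ (c : Fin (2 * 6 - 2)) (m : Fin 3 → Fin (2 * 6 - 2)) (π : Fin 6 → Fin 3),
      (∀ k, T.adj.Adj c (m k)) ∧ (∀ i, T.adj.Adj (m (π i)) (T.leaf i)) ∧
      Function.Bijective (T.depthTwoVertex c m) ∧ (∀ k, #{i | π i = k} = 2) ∧ π 0 = 0 := by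
  obtain ⟨c, hc, hnbr⟩ := h
  obtain ⟨x, y, z, hxy, hxz, hyz, hN⟩ := Set.ncard_eq_three.1 hc
  have hroot : ∀ k, T.adj.Adj c (![x, y, z] k) := by
    intro k; rw [← SimpleGraph.mem_neighborSet, hN]; fin_cases k <;> simp
  have hinj : Function.Injective ![x, y, z] := by
    intro k k'; fin_cases k <;> fin_cases k' <;> simp [hxy, hxz, hyz, hxy.symm, hxz.symm, hyz.symm]
  have hvert : ∀ τ : Equiv.Perm (Fin 3),
      Function.Bijective (T.depthTwoVertex c (![x, y, z] ∘ τ)) :=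
    fun τ => (Fintype.bijective_iff_injective_and_card _).2
      ⟨depthTwoVertex_injective (hinj.comp τ.injective) (fun k => hroot _) hc
        (fun k => hnbr _ (hroot _)), rfl⟩
  obtain ⟨k₀, hk₀⟩ := exists_neighborSet_leaf_eq_singleton_mid (by norm_num) (hvert 1).2 hnbr 0
  set m := ![x, y, z] ∘ Equiv.swap 0 k₀
  choose π hπ using
    exists_neighborSet_leaf_eq_singleton_mid (by norm_num) (hvert (Equiv.swap 0 k₀)).2 hnbr
  have hleaf : ∀ i, T.adj.Adj (m (π i)) (T.leaf i) := fun i =>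
    ((T.adj.mem_neighborSet _ _).1 (by rw [hπ]; rfl)).symm
  refine ⟨c, m, π, fun k => hroot _, hleaf, hvert _, card_fiber_eq_of_card_fiber_le
    (card_fiber_le_two (fun k => hroot _) hc (fun k => hnbr _ (hroot _)) hπ) rfl, ?_⟩
  refine (hinj.comp (Equiv.swap 0 k₀).injective) (Set.singleton_injective ?_)
  rw [← hπ, hk₀]
  simp

end PhyloTree

lemma charCompatible_iff {n : ℕ} (f₁ f₂ : Fin n → Bool) :
    CharCompatible f₁ f₂ ↔ ∃ a b, ∀ i, ¬(f₁ i = a ∧ f₂ i = b) := by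
  simp only [CharCompatible, Set.eq_empty_iff_forall_notMem, Set.mem_inter_iff,
    Set.mem_ofPred_eq, Bool.exists_bool, or_assoc]

lemma charCompatible_comp_equiv {n : ℕ} (σ : Fin n ≃ Fin n) (f₁ f₂ : Fin n → Bool) :
    CharCompatible (f₁ ∘ σ) (f₂ ∘ σ) ↔ CharCompatible f₁ f₂ := by
  rw [charCompatible_iff, charCompatible_iff]
  exact exists_congr fun a => exists_congr fun b =>
    σ.forall_congr_right (q := fun i => ¬(f₁ i = a ∧ f₂ i = b))

def cherry (i : Fin 6) : Fin 3 := ⟨i / 2, by omega⟩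

lemma ncard_cherry_incompatible_pairs :
    {p : (Fin 6 → Bool) × (Fin 6 → Bool) |
      p.1 0 = false ∧ p.2 0 = false ∧ depthTwoScore cherry p.1 = 1 ∧
        depthTwoScore cherry p.2 = 2 ∧ ¬ CharCompatible p.1 p.2}.ncard = 30 := by
  -- Filtering the product of the two score classes, not all 4096 pairs, keeps `decide` cheap.
  let scoreClass (s : ℕ) : Finset (Fin 6 → Bool) := {f | f 0 = false ∧ depthTwoScore cherry f = s}
  have hset : {p : (Fin 6 → Bool) × (Fin 6 → Bool) |
      p.1 0 = false ∧ p.2 0 = false ∧ depthTwoScore cherry p.1 = 1 ∧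
        depthTwoScore cherry p.2 = 2 ∧ ¬ CharCompatible p.1 p.2} =
      ↑((scoreClass 1 ×ˢ scoreClass 2).filter
        fun p => ¬ ∃ a b, ∀ i, ¬(p.1 i = a ∧ p.2 i = b)) := by
    ext p
    simp only [coe_filter, mem_product, mem_filter, mem_univ, true_and, scoreClass,
      charCompatible_iff, Set.mem_ofPred_eq]
    tauto
  rw [hset, Set.ncard_coe_finset]
  decide

/-- For a symmetric-shape tree T on six leaves, there are exactly 30 ordered
pairs (f₁, f₂) of characters with f₁(1) = f₂(1) = 0, ps(f₁,T) = 1, ps(f₂,T) = 2,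
and f₁, f₂ incompatible with each other. -/
theorem stmt16 (T : PhyloTree 6) (h : IsSymmetricShape T) :
    Set.ncard {p : (Fin 6 → Bool) × (Fin 6 → Bool) |
      p.1 0 = false ∧ p.2 0 = false ∧ ps p.1 T = 1 ∧ ps p.2 T = 2 ∧
        ¬ CharCompatible p.1 p.2} = 30 := by
  obtain ⟨c, m, π, hroot, hleaf, hvert, hfiber, hπ0⟩ := T.exists_depthTwo_of_isSymmetricShape h
  obtain ⟨σ, hσ, hσ0⟩ := exists_equiv_comp_eq_of_card_fiber (π₀ := cherry)
    (fun k => by rw [hfiber]; fin_cases k <;> decide) 0 hπ0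
  have hps : ∀ f, ps f T = depthTwoScore cherry (f ∘ σ) := fun f => by
    rw [T.ps_eq_depthTwoScore hroot hleaf hvert, ← hσ, depthTwoScore_comp_equiv]
  let Φ := (σ.symm.arrowCongr (Equiv.refl Bool)).prodCongr (σ.symm.arrowCongr (Equiv.refl Bool))
  rw [← ncard_cherry_incompatible_pairs]
  refine (congrArg Set.ncard ?_).trans
    (Set.ncard_preimage_of_injective_subset_range Φ.injective (by simp))
  ext p
  simp [Φ, Equiv.arrowCongr, hps, hσ0, charCompatible_comp_equiv]
end

section
/- For every n ≥ 3 and every pair of binary phylogenetic trees T, T' on leaf set {1,…,n}, the number of characters f for which T is a maximum parsimony tree equals the number of characters f for which T' is a maximum parsimony tree. That is, for a single character (k = 1), the probability of being a maximum parsimony tree is the same for every tree in UB(n). -/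
open Classical

/-!
Trees are connected, so a character has parsimony score `0` on a tree iff it is constant, and
score at least `1` otherwise. Every character has score at most `1` on a caterpillar whose leaves
are sorted so that the character is monotone along the spine. Hence `T` is a maximum parsimony
tree for `f` iff `ps f T ≤ 1`, i.e. iff `f` is the restriction to the leaves of a vertex colouring
of `T` that changes along at most one edge.

On a tree, `g ↦ (g v₀, edges where g changes)` is injective, hence bijective onto
`Bool × Set E` by counting; so exactly `2 (|E| + 1) = 2 (2n - 2)` colourings change along at most
one edge. Restriction to the leaves is injective on them: two such colourings agree on each
component of `T` minus their (at most two) changing edges, and each such component contains a leaf.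
-/

open SimpleGraph Function

lemma Set.ncard_setOf_ncard_le_one {α : Type*} [Finite α] :
    {s : Set α | s.ncard ≤ 1}.ncard = Nat.card α + 1 := by
  have : {s : Set α | s.ncard ≤ 1} = insert ∅ (Set.range singleton) := by
    ext s
    rw [Set.mem_insert_iff, Set.mem_range, Set.mem_ofPred_eq, Set.ncard_le_one_iff_eq]
    simp only [eq_comm]
  rw [this, Set.ncard_insert_of_notMem (by simp),
    Set.ncard_range_of_injective Set.singleton_injective]

lemma Sym2.ncard_setOf_mk_mem_le {V : Type*} [Finite V] (y : V) (S : Set (Sym2 V)) :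
    {x | s(y, x) ∈ S}.ncard ≤ S.ncard :=
  Set.ncard_le_ncard_of_injOn (fun x => s(y, x)) (fun _ hx => hx)
    (fun _ _ _ _ h => Sym2.congr_right.mp h)

namespace SimpleGraph

variable {V : Type*} {G : SimpleGraph V}

lemma Reachable.apply_eq_of_forall_adj {β : Type*} {g : V → β}
    (h : ∀ u v, G.Adj u v → g u = g v) {a b : V} (hab : G.Reachable a b) : g a = g b := by
  obtain ⟨p⟩ := hab
  induction p with
  | nil => rfl
  | cons hadj _ ih => exact (h _ _ hadj).trans ih

def changingEdges (G : SimpleGraph V) (g : V → Bool) : Set G.edgeSet :=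
  {e | ∃ u v, (e : Sym2 V) = s(u, v) ∧ g u ≠ g v}

lemma mk_mem_changingEdges {g : V → Bool} {u v : V} (h : G.Adj u v) :
    (⟨s(u, v), h⟩ : G.edgeSet) ∈ G.changingEdges g ↔ g u ≠ g v := by
  refine ⟨fun ⟨a, b, hab, hne⟩ => ?_, fun hne => ⟨u, v, rfl, hne⟩⟩
  rcases Sym2.eq_iff.mp hab with ⟨rfl, rfl⟩ | ⟨rfl, rfl⟩
  exacts [hne, hne.symm]

lemma apply_eq_of_adj_deleteEdges {g : V → Bool} {S : Set (Sym2 V)}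
    (hS : Subtype.val '' G.changingEdges g ⊆ S) {u v : V} (h : (G.deleteEdges S).Adj u v) :
    g u = g v := by
  rw [deleteEdges_adj] at h
  by_contra hne
  exact h.2 (hS ⟨_, (mk_mem_changingEdges h.1).mpr hne, rfl⟩)

lemma Connected.injective_changingEdges (hG : G.Connected) (v₀ : V) :
    Injective fun g : V → Bool => (g v₀, G.changingEdges g) := by
  intro g g' hgg'
  obtain ⟨h₀, hE⟩ := Prod.mk.inj hgg'
  have hadj : ∀ u v, G.Adj u v → (g u = g' u) = (g v = g' v) := by
    intro u v huv
    have := congrArg (⟨s(u, v), huv⟩ ∈ ·) hE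
    simp only [mk_mem_changingEdges huv, eq_iff_iff] at this ⊢
    revert this
    cases g u <;> cases g v <;> cases g' u <;> cases g' v <;> decide
  funext w
  exact cast (Reachable.apply_eq_of_forall_adj hadj (hG.preconnected v₀ w)) h₀

section Finite

variable [Finite V]

lemma IsTree.bijective_changingEdges (hG : G.IsTree) (v₀ : V) :
    Bijective fun g : V → Bool => (g v₀, G.changingEdges g) := by
  refine (Nat.bijective_iff_injective_and_card _).mpr
    ⟨hG.connected.injective_changingEdges v₀, ?_⟩
  have := Fintype.ofFinite G.edgeSet
  rw [Nat.card_fun, Nat.card_prod, Nat.card_eq_fintype_card (α := Set _), Fintype.card_set,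
    ← Nat.card_eq_fintype_card, ← (isTree_iff_connected_and_card.mp hG).2, pow_succ']
  simp

lemma IsTree.ncard_setOf_ncard_changingEdges_le_one (hG : G.IsTree) :
    {g : V → Bool | (G.changingEdges g).ncard ≤ 1}.ncard = 2 * Nat.card V := by
  obtain ⟨v₀⟩ := hG.nonempty
  have hbij := hG.bijective_changingEdges v₀
  have : {g : V → Bool | (G.changingEdges g).ncard ≤ 1} =
      (fun g => (g v₀, G.changingEdges g)) ⁻¹' (Set.univ ×ˢ {s | s.ncard ≤ 1}) := by
    ext
    simp
  rw [this, Set.ncard_preimage_of_injective_subset_range hbij.1 (by simp [hbij.2.range_eq]),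
    Set.ncard_prod, Set.ncard_univ, Nat.card_eq_fintype_card (α := Bool), Fintype.card_bool,
    Set.ncard_setOf_ncard_le_one, (isTree_iff_connected_and_card.mp hG).2]

lemma IsAcyclic.exists_ne_reachable_neighborSet_subsingleton (hG : G.IsAcyclic)
    {x : V} (hx : (G.neighborSet x).Nonempty) :
    ∃ y ≠ x, G.Reachable x y ∧ (G.neighborSet y).Subsingleton := by
  have := Fintype.ofFinite V
  let lengths : Set ℕ := {m | ∃ y, ∃ p : G.Walk x y, p.IsPath ∧ p.length = m}
  have hbdd : BddAbove lengths := ⟨Fintype.card V, by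
    rintro _ ⟨_, p, hp, rfl⟩
    exact hp.length_lt.le⟩
  obtain ⟨y, p, hp, hmax⟩ := Nat.sSup_mem (s := lengths) ⟨0, x, .nil, .nil, rfl⟩ hbdd
  have hsupp : ∀ z, G.Adj y z → z ∈ p.support := by
    intro z hyz
    by_contra hz
    have := le_csSup hbdd ⟨z, p.concat hyz, hp.concat hz hyz, rfl⟩
    rw [Walk.length_concat] at this
    omega
  have hyx : y ≠ x := by
    rintro rfl
    obtain ⟨z, hz⟩ := hx
    have := hsupp z hz
    rw [Walk.eq_nil_iff_nil.mpr (Walk.isPath_iff_nil.mp hp), Walk.support_nil,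
      List.mem_singleton] at this
    exact G.loopless.irrefl _ (this ▸ hz)
  refine ⟨y, hyx, ⟨p⟩, fun z hz z' hz' => ?_⟩
  rw [hG.eq_penultimate_of_adj_end hp hz (hsupp z hz),
    hG.eq_penultimate_of_adj_end hp hz' (hsupp z' hz')]

lemma ncard_neighborSet_le_deleteEdges_add (y : V) (S : Set (Sym2 V)) :
    (G.neighborSet y).ncard ≤
      ((G.deleteEdges S).neighborSet y).ncard + {x | s(y, x) ∈ S}.ncard := by
  refine (Set.ncard_le_ncard fun x hx => ?_).trans (Set.ncard_union_le _ _)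
  by_cases hxS : s(y, x) ∈ S
  exacts [Or.inr hxS, Or.inl (deleteEdges_adj.mpr ⟨hx, hxS⟩)]

lemma ncard_eq_two_and_forall_mem_of_subsingleton {y : V} {S : Set (Sym2 V)}
    (h3 : (G.neighborSet y).ncard = 3) (hS : S.ncard ≤ 2)
    (hy : ((G.deleteEdges S).neighborSet y).Subsingleton) :
    S.ncard = 2 ∧ ∀ e ∈ S, y ∈ e := by
  have := G.ncard_neighborSet_le_deleteEdges_add y S
  have := Set.ncard_le_one_iff_subsingleton.mpr hy
  have := Sym2.ncard_setOf_mk_mem_le y S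
  obtain ⟨x₁, x₂, hx₁, hx₂, hne⟩ :=
    (Set.one_lt_ncard_iff).mp (show 1 < {x | s(y, x) ∈ S}.ncard by omega)
  have hpair : ({s(y, x₁), s(y, x₂)} : Set (Sym2 V)).ncard = 2 :=
    Set.ncard_pair (mt Sym2.congr_right.mp hne)
  have hsub : ({s(y, x₁), s(y, x₂)} : Set (Sym2 V)) ⊆ S := Set.pair_subset hx₁ hx₂
  have hSeq := (Set.eq_of_subset_of_ncard_le hsub (hpair ▸ hS)).symm
  refine ⟨hSeq ▸ hpair, fun e he => ?_⟩
  rw [hSeq] at he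
  rcases he with rfl | rfl <;> exact Sym2.mem_mk_left _ _

end Finite

section Parent

variable {N : ℕ} {p : ℕ → ℕ}

lemma connected_fromRel_parent (hN : 0 < N) (hp : ∀ a ≠ 0, p a < a) :
    (fromRel fun a b : Fin N => (b : ℕ) = p a).Connected := by
  refine (connected_iff_exists_forall_reachable _).mpr ⟨⟨0, hN⟩, fun a => ?_⟩
  induction' ha : a.val using Nat.strong_induction_on with m ih generalizing a
  by_cases hm : m = 0
  · obtain rfl : a = ⟨0, hN⟩ := Fin.ext (ha ▸ hm)
    rfl
  have hpa : p a < a := hp a (ha ▸ hm)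
  let b : Fin N := ⟨p a, hpa.trans a.2⟩
  have hab : (fromRel fun a b : Fin N => (b : ℕ) = p a).Adj b a :=
    (fromRel_adj _ _ _).mpr ⟨fun h => hpa.ne (congrArg Fin.val h), Or.inr rfl⟩
  exact (ih _ (ha ▸ hpa) b rfl).trans hab.reachable

lemma isTree_fromRel_parent (hN : 0 < N) (hp : ∀ a ≠ 0, p a < a) (hp0 : p 0 = 0) :
    (fromRel fun a b : Fin N => (b : ℕ) = p a).IsTree := by
  set G := fromRel fun a b : Fin N => (b : ℕ) = p a
  have hconn : G.Connected := connected_fromRel_parent hN hp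
  refine isTree_iff_connected_and_card.mpr
    ⟨hconn, le_antisymm ?_ hconn.card_vert_le_card_edgeSet_add_one⟩
  let edge (j : Fin (N - 1)) : G.edgeSet :=
    ⟨s(⟨j + 1, by omega⟩, ⟨p (j + 1), (hp _ (Nat.succ_ne_zero _)).trans (by omega)⟩),
      (fromRel_adj (fun a b : Fin N => (b : ℕ) = p a) _ _).mpr
        ⟨fun h => (hp _ (Nat.succ_ne_zero _)).ne' (congrArg Fin.val h), Or.inl rfl⟩⟩
  have hsurj : Surjective edge := by
    rintro ⟨e, he⟩
    induction e using Sym2.ind with | _ u v => ?_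
    obtain ⟨huv, h | h⟩ := (fromRel_adj (fun a b : Fin N => (b : ℕ) = p a) u v).mp he
    · have hu : (u : ℕ) ≠ 0 := fun h0 => huv (Fin.ext (by rw [h, h0, hp0]))
      refine ⟨⟨u - 1, by omega⟩, Subtype.ext ?_⟩
      simp only [edge, Nat.sub_add_cancel (Nat.pos_of_ne_zero hu)]
      exact congrArg₂ _ rfl (Fin.ext (by simp [h]))
    · have hv : (v : ℕ) ≠ 0 := fun h0 => huv (Fin.ext (by rw [h, h0, hp0]))
      refine ⟨⟨v - 1, by omega⟩, Subtype.ext ?_⟩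
      simp only [edge, Nat.sub_add_cancel (Nat.pos_of_ne_zero hv), Sym2.eq_swap (a := u)]
      exact congrArg₂ _ rfl (Fin.ext (by simp [h]))
  have := Nat.card_le_card_of_surjective edge hsurj
  simp only [Nat.card_eq_fintype_card, Fintype.card_fin] at this ⊢
  omega

end Parent

end SimpleGraph

section

variable {n : ℕ}

lemma PhyloTree.isTree (T : PhyloTree n) : T.adj.IsTree := ⟨T.connected, T.acyclic⟩

lemma PhyloTree.ncard_neighborSet_eq_three (T : PhyloTree n) {y : Fin (2 * n - 2)}
    (hy : ∀ i, T.leaf i ≠ y) : (T.adj.neighborSet y).ncard = 3 :=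
  (T.degOneOrThree y).resolve_left fun h => by
    obtain ⟨i, hi⟩ := (T.leaf_range y).mp h
    exact hy i hi

/-- Ends of maximal paths in the remaining forest keep at most one neighbour; an internal such
end is incident to both deleted edges, and two distinct ends cannot both be. -/
lemma PhyloTree.exists_reachable_leaf_deleteEdges (T : PhyloTree n) (x : Fin (2 * n - 2))
    {S : Set (Sym2 (Fin (2 * n - 2)))} (hS : S.ncard ≤ 2) :
    ∃ i, (T.adj.deleteEdges S).Reachable x (T.leaf i) := by
  have hG : (T.adj.deleteEdges S).IsAcyclic := T.acyclic.anti (deleteEdges_le _)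
  by_contra! hx
  have hint : ∀ y, (T.adj.deleteEdges S).Reachable x y → (T.adj.neighborSet y).ncard = 3 :=
    fun y hy => T.ncard_neighborSet_eq_three fun i hi => hx i (hi ▸ hy)
  have hnonempty : ∀ y, (T.adj.deleteEdges S).Reachable x y →
      ((T.adj.deleteEdges S).neighborSet y).Nonempty := fun y hy =>
    Set.nonempty_of_ncard_ne_zero <| by
      have := T.adj.ncard_neighborSet_le_deleteEdges_add y S
      have := Sym2.ncard_setOf_mk_mem_le y S
      have := hint y hy
      omega
  obtain ⟨y₁, -, hxy₁, hy₁⟩ :=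
    hG.exists_ne_reachable_neighborSet_subsingleton (hnonempty x .rfl)
  obtain ⟨y₂, hy₂₁, hy₁y₂, hy₂⟩ :=
    hG.exists_ne_reachable_neighborSet_subsingleton (hnonempty y₁ hxy₁)
  obtain ⟨hS2, hmem₁⟩ :=
    ncard_eq_two_and_forall_mem_of_subsingleton (hint y₁ hxy₁) hS hy₁
  obtain ⟨-, hmem₂⟩ :=
    ncard_eq_two_and_forall_mem_of_subsingleton (hint y₂ (hxy₁.trans hy₁y₂)) hS hy₂
  have : S ⊆ {s(y₂, y₁)} := fun e he =>
    (Sym2.mem_and_mem_iff hy₂₁).mp ⟨hmem₂ e he, hmem₁ e he⟩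
  have := Set.ncard_le_ncard this
  rw [Set.ncard_singleton] at this
  omega

lemma PhyloTree.injOn_comp_leaf (T : PhyloTree n) :
    Set.InjOn (· ∘ T.leaf) {g | (T.adj.changingEdges g).ncard ≤ 1} := by
  intro g hg g' hg' hgg'
  let S := Subtype.val '' (T.adj.changingEdges g ∪ T.adj.changingEdges g')
  have hS : S.ncard ≤ 2 :=
    (Set.ncard_image_le (Set.toFinite _)).trans
      ((Set.ncard_union_le _ _).trans (Nat.add_le_add hg hg'))
  have hconst : ∀ h ∈ ({g, g'} : Set _), ∀ u v,
      (T.adj.deleteEdges S).Adj u v → h u = h v := by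
    rintro h (rfl | rfl) u v huv
    exacts [apply_eq_of_adj_deleteEdges (Set.image_mono Set.subset_union_left) huv,
      apply_eq_of_adj_deleteEdges (Set.image_mono Set.subset_union_right) huv]
  funext x
  obtain ⟨i, hi⟩ := T.exists_reachable_leaf_deleteEdges x hS
  calc g x = g (T.leaf i) := Reachable.apply_eq_of_forall_adj (hconst g (by simp)) hi
    _ = g' (T.leaf i) := congrFun hgg' i
    _ = g' x := (Reachable.apply_eq_of_forall_adj (hconst g' (by simp)) hi).symm

lemma changingNumber_eq_ncard_changingEdges (T : PhyloTree n) (g : Fin (2 * n - 2) → Bool) :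
    changingNumber T g = (T.adj.changingEdges g).ncard := by
  rw [changingNumber, ← Set.ncard_image_of_injective _ Subtype.val_injective]
  congr 1
  ext e
  simp [changingEdges, and_comm]

lemma ps_le_changingNumber {T : PhyloTree n} {f : Fin n → Bool} {g : Fin (2 * n - 2) → Bool}
    (hg : ∀ i, g (T.leaf i) = f i) : ps f T ≤ changingNumber T g :=
  Nat.sInf_le ⟨g, hg, rfl⟩

lemma exists_changingNumber_eq_ps (T : PhyloTree n) (f : Fin n → Bool) :
    ∃ g : Fin (2 * n - 2) → Bool, (∀ i, g (T.leaf i) = f i) ∧ changingNumber T g = ps f T :=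
  Nat.sInf_mem (s := {m | ∃ g : Fin (2 * n - 2) → Bool,
    (∀ i, g (T.leaf i) = f i) ∧ changingNumber T g = m})
    ⟨_, Function.extend T.leaf f fun _ => false, T.leaf_inj.extend_apply f _, rfl⟩

lemma ps_eq_zero_iff {T : PhyloTree n} {f : Fin n → Bool} :
    ps f T = 0 ↔ ∀ i j, f i = f j := by
  constructor
  · intro h i j
    obtain ⟨g, hg, hcn⟩ := exists_changingNumber_eq_ps T f
    rw [h, changingNumber_eq_ncard_changingEdges, Set.ncard_eq_zero] at hcn
    have hadj : ∀ u v, T.adj.Adj u v → g u = g v := fun u v huv => by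
      by_contra hne
      exact (hcn ▸ (mk_mem_changingEdges huv).mpr hne : _ ∈ (∅ : Set T.adj.edgeSet))
    rw [← hg i, ← hg j]
    exact Reachable.apply_eq_of_forall_adj hadj (T.connected.preconnected _ _)
  · intro h
    have hg : ∀ i, decide (∃ j, f j = true) = f i := fun i => by
      cases hfi : f i
      · simp [hfi, fun j => h j i]
      · exact decide_eq_true ⟨i, hfi⟩
    have hcn := ps_le_changingNumber (T := T) (g := fun _ => decide (∃ j, f j = true)) hg
    rw [changingNumber_eq_ncard_changingEdges] at hcn
    simpa [changingEdges] using hcn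

lemma setOf_ps_le_one (T : PhyloTree n) :
    {f | ps f T ≤ 1} = (· ∘ T.leaf) '' {g | (T.adj.changingEdges g).ncard ≤ 1} := by
  ext f
  constructor
  · intro hf
    obtain ⟨g, hg, hcn⟩ := exists_changingNumber_eq_ps T f
    exact ⟨g, by simpa [← changingNumber_eq_ncard_changingEdges, hcn] using hf, funext hg⟩
  · rintro ⟨g, hg, rfl⟩
    exact (ps_le_changingNumber fun _ => rfl).trans
      (by rwa [changingNumber_eq_ncard_changingEdges])

lemma ncard_setOf_ps_le_one (T : PhyloTree n) : {f | ps f T ≤ 1}.ncard = 2 * (2 * n - 2) := by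
  rw [setOf_ps_le_one, T.injOn_comp_leaf.ncard_image,
    T.isTree.ncard_setOf_ncard_changingEdges_le_one, Nat.card_eq_fintype_card, Fintype.card_fin]

/-- Vertex `a` of the caterpillar is joined to `caterpillarParent a`: the odd vertices
`1, 3, …, 2n - 5` form the spine, and the leaves are the even vertices and `2n - 3`. -/
def caterpillarParent (a : ℕ) : ℕ := if a % 2 = 1 then a - 2 else a - 1

def caterpillar (n : ℕ) : SimpleGraph (Fin (2 * n - 2)) :=
  fromRel fun a b => (b : ℕ) = caterpillarParent a

/-- The position along the spine; the leaf at position `j` is `min (2 j) (2 n - 3)`. -/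
def caterpillarPos (a : Fin (2 * n - 2)) : Fin n := ⟨(a + 1) / 2, by omega⟩

lemma isTree_caterpillar (hn : 2 ≤ n) : (caterpillar n).IsTree :=
  isTree_fromRel_parent (by omega) (fun a ha => by unfold caterpillarParent; split_ifs <;> omega)
    rfl

lemma ncard_neighborSet_caterpillar (a : Fin (2 * n - 2)) :
    ((caterpillar n).neighborSet a).ncard =
      if (a : ℕ) % 2 = 1 ∧ (a : ℕ) + 2 < 2 * n - 2 then 3 else 1 := by
  have hpre : (caterpillar n).neighborSet a = Fin.val ⁻¹' {m | m < 2 * n - 2 ∧ m ≠ a ∧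
      (m = caterpillarParent a ∨ (a : ℕ) = caterpillarParent m)} := by
    ext b
    simp [caterpillar, Fin.ext_iff, eq_comm]
  rw [hpre, Set.ncard_preimage_of_injective_subset_range Fin.val_injective
    fun m hm => ⟨⟨m, hm.1⟩, rfl⟩]
  split_ifs with h
  · refine Set.ncard_eq_three.mpr ⟨a - 2, a + 1, a + 2, by omega, by omega, by omega, ?_⟩
    ext m
    simp only [caterpillarParent, Set.mem_ofPred_eq, Set.mem_insert_iff, Set.mem_singleton_iff]
    split_ifs <;> omega
  · refine Set.ncard_eq_one.mpr ⟨if (a : ℕ) = 0 then 1 else caterpillarParent a, ?_⟩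
    ext m
    simp only [caterpillarParent, Set.mem_ofPred_eq, Set.mem_singleton_iff]
    split_ifs <;> omega

/-- The caterpillar in which leaf `i` sits at position `σ i` along the spine. -/
def caterpillarTree (hn : 2 ≤ n) (σ : Equiv.Perm (Fin n)) : PhyloTree n where
  adj := caterpillar n
  connected := (isTree_caterpillar hn).connected
  acyclic := (isTree_caterpillar hn).isAcyclic
  degOneOrThree v := by
    rw [ncard_neighborSet_caterpillar]
    split_ifs <;> simp
  leaf i := ⟨min (2 * σ i) (2 * n - 3), by omega⟩
  leaf_inj i j h := σ.injective <| Fin.ext <| by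
    have := (σ i).2
    have := (σ j).2
    simp only [Fin.mk.injEq] at h
    omega
  leaf_range v := by
    rw [ncard_neighborSet_caterpillar]
    constructor
    · intro hv
      split_ifs at hv with h
      · omega
      refine ⟨σ.symm (caterpillarPos v), Fin.ext ?_⟩
      simp only [caterpillarPos, Equiv.apply_symm_apply]
      omega
    · rintro ⟨i, rfl⟩
      have := (σ i).2
      split_ifs with h
      · simp only at h
        omega
      · rfl

lemma caterpillarPos_leaf (hn : 2 ≤ n) (σ : Equiv.Perm (Fin n)) (i : Fin n) :
    caterpillarPos ((caterpillarTree hn σ).leaf i) = σ i :=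
  Fin.ext (by simp only [caterpillarTree, caterpillarPos]; omega)

section Monotone

variable {F : Fin n → Bool}

lemma caterpillarPos_switch_of_ne (hF : Monotone F) {u v : Fin (2 * n - 2)}
    (h : (v : ℕ) = caterpillarParent u) (hne : F (caterpillarPos v) ≠ F (caterpillarPos u)) :
    F (caterpillarPos v) = false ∧ F (caterpillarPos u) = true ∧ (u : ℕ) % 2 = 1 := by
  have hle : caterpillarPos v ≤ caterpillarPos u :=
    Fin.mk_le_mk.mpr (by simp only [h, caterpillarParent]; split_ifs <;> omega)
  have hodd : (u : ℕ) % 2 = 1 := by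
    by_contra hu
    refine hne (congrArg F (Fin.ext ?_))
    simp only [caterpillarPos, h, caterpillarParent]
    split_ifs
    omega
  have := hF hle
  revert this hne
  cases F (caterpillarPos v) <;> cases F (caterpillarPos u) <;> simp [hodd]

lemma caterpillarPos_le_of_switch (hF : Monotone F) {u v u' : Fin (2 * n - 2)}
    (h : (v : ℕ) = caterpillarParent u) (hv : F (caterpillarPos v) = false)
    (hu' : F (caterpillarPos u') = true) : caterpillarPos u ≤ caterpillarPos u' := by
  by_contra hlt
  have := hF (show caterpillarPos u' ≤ caterpillarPos v from Fin.mk_le_mk.mpr <| by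
    simp only [caterpillarPos, Fin.lt_def, not_le] at hlt
    simp only [h, caterpillarParent]
    split_ifs <;> omega)
  rw [hu', hv] at this
  exact absurd this (by decide)

lemma changingEdges_caterpillar_subsingleton (hF : Monotone F) :
    ((caterpillar n).changingEdges (F ∘ caterpillarPos)).Subsingleton := by
  have hswitch : ∀ e ∈ (caterpillar n).changingEdges (F ∘ caterpillarPos),
      ∃ u v : Fin (2 * n - 2), (e : Sym2 _) = s(u, v) ∧ (v : ℕ) = caterpillarParent u ∧
        F (caterpillarPos v) = false ∧ F (caterpillarPos u) = true ∧ (u : ℕ) % 2 = 1 := by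
    rintro ⟨e, he⟩ ⟨u, v, rfl, hne⟩
    obtain ⟨-, h | h⟩ :=
      (fromRel_adj (fun a b : Fin (2 * n - 2) => (b : ℕ) = caterpillarParent a) u v).mp he
    · exact ⟨u, v, rfl, h, caterpillarPos_switch_of_ne hF h (Ne.symm hne)⟩
    · exact ⟨v, u, Sym2.eq_swap, h, caterpillarPos_switch_of_ne hF h hne⟩
  rintro e he e' he'
  obtain ⟨u, v, hue, hv, hFv, hFu, hu⟩ := hswitch e he
  obtain ⟨u', v', hue', hv', hFv', hFu', hu'⟩ := hswitch e' he'
  have h₁ := caterpillarPos_le_of_switch hF hv hFv hFu'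
  have h₂ := caterpillarPos_le_of_switch hF hv' hFv' hFu
  simp only [caterpillarPos, Fin.mk_le_mk] at h₁ h₂
  have huu' : u = u' := Fin.ext (by omega)
  have hvv' : v = v' := Fin.ext (by rw [hv, hv', huu'])
  exact Subtype.ext (by rw [hue, hue', huu', hvv'])

end Monotone

/-- Sorting the leaves makes `f` monotone along the spine, so colouring each vertex by the value
of `f` at its position changes along one edge only. -/
lemma ps_caterpillarTree_le_one (hn : 2 ≤ n) (f : Fin n → Bool) :
    ps f (caterpillarTree hn (Tuple.sort f).symm) ≤ 1 := by
  have hg : ∀ i, ((f ∘ Tuple.sort f) ∘ caterpillarPos)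
      ((caterpillarTree hn (Tuple.sort f).symm).leaf i) = f i := fun i => by
    simp [caterpillarPos_leaf]
  refine (ps_le_changingNumber hg).trans ?_
  rw [changingNumber_eq_ncard_changingEdges, Set.ncard_le_one_iff_subsingleton]
  exact changingEdges_caterpillar_subsingleton (Tuple.monotone_sort f)

lemma forall_ps_le_iff (hn : 2 ≤ n) (T : PhyloTree n) (f : Fin n → Bool) :
    (∀ T' : PhyloTree n, ps f T ≤ ps f T') ↔ ps f T ≤ 1 := by
  refine ⟨fun h => (h _).trans (ps_caterpillarTree_le_one hn f), fun h T' => ?_⟩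
  by_contra! hlt
  have : ps f T = 0 := ps_eq_zero_iff.mpr (ps_eq_zero_iff.mp (show ps f T' = 0 by omega))
  omega

end

/-- For n ≥ 3 and a single character (k = 1), every binary phylogenetic tree on
{1,…,n} is a maximum parsimony tree for the same number of characters. -/
theorem stmt17 (n : ℕ) (hn : 3 ≤ n) (T T' : PhyloTree n) :
    Set.ncard {f : Fin n → Bool | ∀ T'' : PhyloTree n, ps f T ≤ ps f T''} =
      Set.ncard {f : Fin n → Bool | ∀ T'' : PhyloTree n, ps f T' ≤ ps f T''} := by
  simp_rw [forall_ps_le_iff (by omega : 2 ≤ n), ncard_setOf_ps_le_one]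
end
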